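/- arXiv:1712.01716 — 6 statements merged into one kernel-verified Lean document; each statement's English description precedes it below -/
import Mathlib

section
/- Suppose c ∈ ℝ^m_{>0} is a complex balanced equilibrium of a reaction network with rate constants κ_k. Let θ_i : ℤ → ℝ_{≥0} (i = 1,…,m) satisfy θ_i(x) = 0 for x ≤ 0 and θ_i(j) > 0 for all integers j ≥ 1, and let λ_k be the associated general intensity functions. Then the product-form measure π_c is a stationary measure for the stochastic model: for every x ∈ ℤ^m_{≥0}, ∑_{k=1}^K π_c(x − y_k' + y_k) λ_k(x − y_k' + y_k) = π_c(x) ∑_{k=1}^K λ_k(x). -/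
open Finset Filter

/-- General (non-mass action) intensity function:
`λ_k(x) = κ_k ∏_i ∏_{j=0}^{y_{ki}-1} θ_i(x_i - j)`. -/
noncomputable def genIntensity (m K : ℕ) (y : Fin K → Fin m → ℕ) (κ : Fin K → ℝ)
    (θ : Fin m → ℤ → ℝ) (k : Fin K) (x : Fin m → ℤ) : ℝ :=
  κ k * ∏ i, ∏ j ∈ Finset.range (y k i), θ i (x i - j)

/-- Product-form measure `π_c(x) = ∏_i c_i^{x_i} / ∏_{j=1}^{x_i} θ_i(j)`,
extended by `0` outside `ℤ^m_{≥0}`. -/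
noncomputable def prodForm (m : ℕ) (c : Fin m → ℝ) (θ : Fin m → ℤ → ℝ)
    (x : Fin m → ℤ) : ℝ :=
  if ∀ i, 0 ≤ x i then
    ∏ i, (c i ^ (x i).toNat / ∏ j ∈ Finset.range (x i).toNat, θ i (j + 1))
  else 0

/-- `c` is a complex balanced equilibrium: for each complex `z`,
`∑_{k : y_k' = z} κ_k c^{y_k} = ∑_{k : y_k = z} κ_k c^{y_k}`. -/
def complexBalanced (m K : ℕ) (y y' : Fin K → Fin m → ℕ) (κ : Fin K → ℝ)
    (c : Fin m → ℝ) : Prop :=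
  ∀ z : Fin m → ℕ, ((∃ k, y k = z) ∨ (∃ k, y' k = z)) →
    ∑ k ∈ Finset.univ.filter (fun k => y' k = z), κ k * ∏ i, c i ^ y k i =
    ∑ k ∈ Finset.univ.filter (fun k => y k = z), κ k * ∏ i, c i ^ y k i

/-- The stationarity equation:
`∑_k μ(x - y_k' + y_k) λ_k(x - y_k' + y_k) = μ(x) ∑_k λ_k(x)` for all `x ∈ ℤ^m_{≥0}`. -/
def stationaryEq (m K : ℕ) (y y' : Fin K → Fin m → ℕ)
    (μ : (Fin m → ℤ) → ℝ) (lam : Fin K → (Fin m → ℤ) → ℝ) : Prop :=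
  ∀ x : Fin m → ℕ,
    ∑ k : Fin K, μ (fun i => (x i : ℤ) - y' k i + y k i) *
        lam k (fun i => (x i : ℤ) - y' k i + y k i)
      = μ (fun i => (x i : ℤ)) * ∑ k : Fin K, lam k (fun i => (x i : ℤ))

/-!
With `π_c(x) = ∏_i c_i^{x_i} / θ_i(1) ⋯ θ_i(x_i)`, the intensity `λ_k` cancels the top `y_{ki}`
factors of each denominator, so `π_c(z) λ_k(z) = κ_k c^{y_k} π_c(z - y_k)`; when `z ≱ y_k` both
sides vanish, because `θ_i(0) = 0` or `π_c` is zero off the orthant. Substituting this into both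
sides of the stationarity equation, each becomes `∑_k κ_k c^{y_k} g(·)` with `g(w) = π_c(x - w)`,
evaluated at `y_k'` on the left and at `y_k` on the right. Grouping reactions by the complex at
which `g` is evaluated, the two sides agree term by term by complex balancing.
-/

section FiberSums

variable {ι α R : Type*} [Fintype ι] [DecidableEq α] [CommSemiring R]

theorem sum_mul_comp_eq_sum_fiber {t : ι → α} {T : Finset α} (hT : ∀ k, t k ∈ T)
    (w : ι → R) (g : α → R) :
    ∑ k, w k * g (t k) = ∑ z ∈ T, (∑ k ∈ univ.filter (fun k => t k = z), w k) * g z := by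
  rw [← sum_fiberwise_of_maps_to (fun k _ => hT k)]
  refine sum_congr rfl fun z _ => ?_
  rw [sum_mul]
  exact sum_congr rfl fun k hk => by rw [(mem_filter.1 hk).2]

theorem sum_mul_comp_eq_of_fiber_sums_eq (s t : ι → α) (w : ι → R) (g : α → R)
    (h : ∀ z, ((∃ k, s k = z) ∨ (∃ k, t k = z)) →
      ∑ k ∈ univ.filter (fun k => t k = z), w k = ∑ k ∈ univ.filter (fun k => s k = z), w k) :
    ∑ k, w k * g (t k) = ∑ k, w k * g (s k) := by
  set T := univ.image s ∪ univ.image t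
  have hs (k : ι) : s k ∈ T := mem_union_left _ (mem_image_of_mem _ (mem_univ k))
  have ht (k : ι) : t k ∈ T := mem_union_right _ (mem_image_of_mem _ (mem_univ k))
  rw [sum_mul_comp_eq_sum_fiber ht, sum_mul_comp_eq_sum_fiber hs]
  refine sum_congr rfl fun z hz => ?_
  rw [h z (by simpa [T] using hz)]

end FiberSums

noncomputable def prodFormFactor (c : ℝ) (θ : ℤ → ℝ) (a : ℤ) : ℝ :=
  c ^ a.toNat / ∏ j ∈ range a.toNat, θ (j + 1)

theorem prodForm_of_nonneg {m : ℕ} (c : Fin m → ℝ) (θ : Fin m → ℤ → ℝ) {x : Fin m → ℤ}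
    (hx : ∀ i, 0 ≤ x i) : prodForm m c θ x = ∏ i, prodFormFactor (c i) (θ i) (x i) :=
  if_pos hx

theorem prodForm_of_neg {m : ℕ} (c : Fin m → ℝ) (θ : Fin m → ℤ → ℝ) {x : Fin m → ℤ} {i : Fin m}
    (hi : x i < 0) : prodForm m c θ x = 0 :=
  if_neg fun h => (h i).not_gt hi

theorem prodFormFactor_mul_prod_range_sub (c : ℝ) {θ : ℤ → ℝ} (hθpos : ∀ j : ℤ, 1 ≤ j → 0 < θ j)
    {n : ℕ} {a : ℤ} (h : (n : ℤ) ≤ a) :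
    prodFormFactor c θ a * ∏ j ∈ range n, θ (a - j) = c ^ n * prodFormFactor c θ (a - n) := by
  set p := (a - n).toNat
  have ha : a.toNat = p + n := by omega
  have hreflect : ∏ j ∈ range n, θ (a - j) = ∏ j ∈ range n, θ ((p + j : ℕ) + 1) := by
    rw [← prod_range_reflect]
    refine prod_congr rfl fun j hj => congrArg θ ?_
    rw [mem_range] at hj
    push_cast
    omega
  have hne : ∏ j ∈ range n, θ (((p + j : ℕ) : ℤ) + 1) ≠ 0 :=
    prod_ne_zero_iff.2 fun j _ => (hθpos _ (by push_cast; omega)).ne'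
  rw [prodFormFactor, prodFormFactor, hreflect, ha, prod_range_add, pow_add, div_mul_eq_mul_div,
    mul_div_mul_right _ _ hne]
  ring

theorem genIntensity_eq_zero {m K : ℕ} (y : Fin K → Fin m → ℕ) (κ : Fin K → ℝ)
    {θ : Fin m → ℤ → ℝ} (hθ0 : ∀ i, ∀ x : ℤ, x ≤ 0 → θ i x = 0) {k : Fin K} {z : Fin m → ℤ}
    {i : Fin m} (hz : 0 ≤ z i) (hi : z i < y k i) : genIntensity m K y κ θ k z = 0 := by
  refine mul_eq_zero_of_right _ (prod_eq_zero (mem_univ i) (prod_eq_zero (i := (z i).toNat) ?_ ?_))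
  · rw [mem_range]
    omega
  · exact hθ0 i _ (by omega)

theorem prodForm_mul_genIntensity {m K : ℕ} (y : Fin K → Fin m → ℕ) (κ : Fin K → ℝ)
    (c : Fin m → ℝ) {θ : Fin m → ℤ → ℝ} (hθ0 : ∀ i, ∀ x : ℤ, x ≤ 0 → θ i x = 0)
    (hθpos : ∀ i, ∀ j : ℤ, 1 ≤ j → 0 < θ i j) (k : Fin K) (z : Fin m → ℤ) :
    prodForm m c θ z * genIntensity m K y κ θ k z
      = κ k * (∏ i, c i ^ y k i) * prodForm m c θ (fun i => z i - y k i) := by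
  by_cases h : ∀ i, (y k i : ℤ) ≤ z i
  · rw [prodForm_of_nonneg c θ fun i => (Int.natCast_nonneg _).trans (h i), genIntensity,
      prodForm_of_nonneg c θ fun i => sub_nonneg.2 (h i), mul_left_comm, mul_assoc (κ k),
      ← prod_mul_distrib, ← prod_mul_distrib,
      prod_congr rfl fun i _ => prodFormFactor_mul_prod_range_sub (c i) (hθpos i) (h i)]
  obtain ⟨i, hi⟩ : ∃ i, z i < y k i := by simpa only [not_forall, not_le] using h
  rw [prodForm_of_neg c θ (x := fun i => z i - y k i) (i := i) (by omega), mul_zero]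
  rcases lt_or_ge (z i) 0 with hz | hz
  · rw [prodForm_of_neg c θ hz, zero_mul]
  · rw [genIntensity_eq_zero y κ hθ0 hz hi, mul_zero]

theorem stmt0_general (m K : ℕ) (y y' : Fin K → Fin m → ℕ) (κ : Fin K → ℝ)
    (c : Fin m → ℝ) (θ : Fin m → ℤ → ℝ)
    (hθ0 : ∀ i, ∀ x : ℤ, x ≤ 0 → θ i x = 0)
    (hθpos : ∀ i, ∀ j : ℤ, 1 ≤ j → 0 < θ i j)
    (hcb : complexBalanced m K y y' κ c) :
    stationaryEq m K y y' (prodForm m c θ) (genIntensity m K y κ θ) := by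
  intro x
  have hshift (k : Fin K) :
      (fun i => (x i : ℤ) - y' k i + y k i - y k i) = fun i => (x i : ℤ) - y' k i :=
    funext fun i => add_sub_cancel_right _ _
  simp only [prodForm_mul_genIntensity y κ c hθ0 hθpos, mul_sum, hshift]
  exact sum_mul_comp_eq_of_fiber_sums_eq y y' _
    (fun w => prodForm m c θ fun i => (x i : ℤ) - w i) hcb

/-- If `c` is a complex balanced equilibrium of the network, then the
product-form measure `π_c` is a stationary measure for the stochastic model with
general intensity functions built from `θ`. -/
theorem stmt0 (m K : ℕ) (y y' : Fin K → Fin m → ℕ) (κ : Fin K → ℝ)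
    (c : Fin m → ℝ) (θ : Fin m → ℤ → ℝ)
    (hyy' : ∀ k, y k ≠ y' k) (hκ : ∀ k, 0 < κ k) (hc : ∀ i, 0 < c i)
    (hθnn : ∀ i x, 0 ≤ θ i x)
    (hθ0 : ∀ i, ∀ x : ℤ, x ≤ 0 → θ i x = 0)
    (hθpos : ∀ i, ∀ j : ℤ, 1 ≤ j → 0 < θ i j)
    (hcb : complexBalanced m K y y' κ c) :
    stationaryEq m K y y' (prodForm m c θ) (genIntensity m K y κ θ) :=
  stmt0_general m K y y' κ c θ hθ0 hθpos hcb
end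

section
/- Suppose c ∈ ℝ^m_{>0} is a complex balanced equilibrium of a reaction network with rate constants κ_k. Then the product of Poisson distributions π(x) = ∏_{i=1}^m e^{−c_i} c_i^{x_i}/x_i! (for x ∈ ℤ^m_{≥0}, extended by 0 outside ℤ^m_{≥0}) is a stationary distribution for the stochastic mass action model: for every x ∈ ℤ^m_{≥0}, ∑_{k=1}^K π(x − y_k' + y_k) λ_k(x − y_k' + y_k) = π(x) ∑_{k=1}^K λ_k(x), and ∑_{x ∈ ℤ^m_{≥0}} π(x) = 1. -/
open Finset Filter

/-- Stochastic mass action intensity: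
`λ_k(x) = κ_k ∏_i x_i!/(x_i - y_{ki})!` when `x_i ≥ y_{ki}` for all `i`, else `0`. -/
noncomputable def maIntensity (m K : ℕ) (y : Fin K → Fin m → ℕ) (κ : Fin K → ℝ)
    (k : Fin K) (x : Fin m → ℤ) : ℝ :=
  if ∀ i, (y k i : ℤ) ≤ x i then
    κ k * ∏ i, ((x i).toNat.factorial : ℝ) / (((x i).toNat - y k i).factorial : ℝ)
  else 0

/-- Product of Poisson distributions with parameter vector `c`, extended by `0`
outside `ℤ^m_{≥0}`. -/
noncomputable def poissonPi (m : ℕ) (c : Fin m → ℝ) (x : Fin m → ℤ) : ℝ :=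
  if ∀ i, 0 ≤ x i then
    ∏ i, Real.exp (-c i) * c i ^ (x i).toNat / ((x i).toNat.factorial : ℝ)
  else 0

/-
Write `w_k = κ_k c^{y_k}` and `π` for the product of Poissons. The falling factorials of the
mass action intensity cancel against the factorials of `π`, giving
`π(v + y_k) λ_k(v + y_k) = w_k π(v)` for every `v ∈ ℤ^m`. Both sides of the stationarity equation
at `x` therefore have the form `∑_k w_k Φ(z_k)` with `Φ(z) = π(x - z)`, evaluated at the product
complexes `z_k = y_k'` on the left and at the source complexes `z_k = y_k` on the right. Grouping
the reactions by complex, complex balance says exactly that these two sums agree. The total mass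
is a product of Poisson masses, each equal to `1`.
-/

theorem Finset.sum_mul_comp_eq_sum_fiber {ι α R : Type*} [Fintype ι] [DecidableEq α]
    [CommSemiring R] (S : Finset α) (g : ι → α) (hg : ∀ k, g k ∈ S) (w : ι → R) (Φ : α → R) :
    ∑ k, w k * Φ (g k) = ∑ z ∈ S, (∑ k with g k = z, w k) * Φ z := by
  rw [← Finset.sum_fiberwise_of_maps_to (fun k _ => hg k)]
  refine Finset.sum_congr rfl fun z _ => ?_
  rw [Finset.sum_mul]
  exact Finset.sum_congr rfl fun k hk => by rw [(Finset.mem_filter.1 hk).2]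

theorem hasSum_fin_pi_prod_of_nonneg {β : Type*} {n : ℕ} {f : Fin n → β → ℝ} {s : Fin n → ℝ}
    (hf0 : ∀ i b, 0 ≤ f i b) (hf : ∀ i, HasSum (f i) (s i)) :
    HasSum (fun x : Fin n → β => ∏ i, f i (x i)) (∏ i, s i) := by
  induction n with
  | zero => simp
  | succ n ih =>
    have hsucc : HasSum (fun x : Fin n → β => ∏ i : Fin n, f i.succ (x i))
        (∏ i : Fin n, s i.succ) :=
      ih (fun i b => hf0 i.succ b) (fun i => hf i.succ)
    have hsucc0 : 0 ≤ fun x : Fin n → β => ∏ i : Fin n, f i.succ (x i) :=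
      Pi.le_def.2 fun x => Finset.prod_nonneg fun i _ => hf0 _ _
    have hsumm := (hf 0).summable.mul_of_nonneg hsucc.summable (Pi.le_def.2 (hf0 0)) hsucc0
    have hprod := (hf 0).mul hsucc hsumm
    rw [← (Fin.consEquiv fun _ => β).hasSum_iff, Fin.prod_univ_succ]
    simpa [Function.comp_def, Fin.prod_univ_succ] using hprod

section MassAction

variable {m K : ℕ}

theorem poissonPi_natCast (c : Fin m → ℝ) (x : Fin m → ℕ) :
    poissonPi m c (fun i => (x i : ℤ)) =
      ∏ i, Real.exp (-c i) * c i ^ x i / ((x i).factorial : ℝ) := by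
  simp [poissonPi]

theorem maIntensity_natCast (y : Fin K → Fin m → ℕ) (κ : Fin K → ℝ) (k : Fin K)
    (x : Fin m → ℕ) :
    maIntensity m K y κ k (fun i => (x i : ℤ)) =
      if ∀ i, y k i ≤ x i then
        κ k * ∏ i, ((x i).factorial : ℝ) / ((x i - y k i).factorial : ℝ)
      else 0 := by
  simp [maIntensity]

theorem poissonPi_add_mul_maIntensity (y : Fin K → Fin m → ℕ) (κ : Fin K → ℝ)
    (c : Fin m → ℝ) (k : Fin K) (v : Fin m → ℤ) :
    poissonPi m c (fun i => v i + y k i) * maIntensity m K y κ k (fun i => v i + y k i) =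
      (κ k * ∏ i, c i ^ y k i) * poissonPi m c v := by
  by_cases hv : ∀ i, 0 ≤ v i
  · obtain ⟨n, rfl⟩ : ∃ n : Fin m → ℕ, v = fun i => (n i : ℤ) :=
      ⟨fun i => (v i).toNat, funext fun i => (Int.toNat_of_nonneg (hv i)).symm⟩
    simp only [← Nat.cast_add]
    rw [poissonPi_natCast, poissonPi_natCast, maIntensity_natCast,
      if_pos fun i => Nat.le_add_left _ _, mul_left_comm, ← Finset.prod_mul_distrib, mul_assoc,
      ← Finset.prod_mul_distrib]
    congr 1
    refine Finset.prod_congr rfl fun i _ => ?_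
    rw [Nat.add_sub_cancel, pow_add]
    field_simp
  · obtain ⟨i, hi⟩ := not_forall.1 hv
    have hy : ¬ ∀ i, (y k i : ℤ) ≤ v i + y k i := fun h => hi (by linarith [h i])
    rw [show poissonPi m c v = 0 from if_neg hv, maIntensity, if_neg hy, mul_zero, mul_zero]

theorem complexBalanced.sum_mul_product_eq_sum_mul_source {y y' : Fin K → Fin m → ℕ}
    {κ : Fin K → ℝ} {c : Fin m → ℝ} (hcb : complexBalanced m K y y' κ c)
    (Φ : (Fin m → ℕ) → ℝ) :
    ∑ k, (κ k * ∏ i, c i ^ y k i) * Φ (y' k) = ∑ k, (κ k * ∏ i, c i ^ y k i) * Φ (y k) := by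
  set S := univ.image y ∪ univ.image y'
  rw [Finset.sum_mul_comp_eq_sum_fiber S y' (fun k => by simp [S]),
    Finset.sum_mul_comp_eq_sum_fiber S y (fun k => by simp [S])]
  refine Finset.sum_congr rfl fun z hz => ?_
  rw [hcb z (by simpa [S, or_comm] using hz)]

theorem stationaryEq_poissonPi_maIntensity {y y' : Fin K → Fin m → ℕ} {κ : Fin K → ℝ}
    {c : Fin m → ℝ} (hcb : complexBalanced m K y y' κ c) :
    stationaryEq m K y y' (poissonPi m c) (maIntensity m K y κ) := by
  intro x
  have hsource : ∀ k, poissonPi m c (fun i => (x i : ℤ)) *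
      maIntensity m K y κ k (fun i => (x i : ℤ)) =
        (κ k * ∏ i, c i ^ y k i) * poissonPi m c (fun i => (x i : ℤ) - y k i) := fun k => by
    simpa only [sub_add_cancel] using
      poissonPi_add_mul_maIntensity y κ c k (fun i => (x i : ℤ) - y k i)
  simp only [Finset.mul_sum, hsource, poissonPi_add_mul_maIntensity]
  exact hcb.sum_mul_product_eq_sum_mul_source fun z => poissonPi m c fun i => (x i : ℤ) - z i

theorem tsum_poissonPi_natCast {c : Fin m → ℝ} (hc : ∀ i, 0 ≤ c i) :
    ∑' x : Fin m → ℕ, poissonPi m c (fun i => (x i : ℤ)) = 1 := by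
  simp only [poissonPi_natCast]
  have hpoisson (i : Fin m) :
      HasSum (fun n : ℕ => Real.exp (-c i) * c i ^ n / (n.factorial : ℝ)) 1 :=
    ProbabilityTheory.hasSum_one_poissonMeasure ⟨c i, hc i⟩
  have hnonneg (i : Fin m) (n : ℕ) : 0 ≤ Real.exp (-c i) * c i ^ n / (n.factorial : ℝ) := by
    have := hc i
    positivity
  exact (hasSum_fin_pi_prod_of_nonneg hnonneg hpoisson).tsum_eq.trans Finset.prod_const_one

end MassAction

theorem stmt1_general (m K : ℕ) (y y' : Fin K → Fin m → ℕ) (κ : Fin K → ℝ) (c : Fin m → ℝ)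
    (hc : ∀ i, 0 < c i)
    (hcb : complexBalanced m K y y' κ c) :
    stationaryEq m K y y' (poissonPi m c) (maIntensity m K y κ) ∧
      ∑' x : Fin m → ℕ, poissonPi m c (fun i => (x i : ℤ)) = 1 :=
  ⟨stationaryEq_poissonPi_maIntensity hcb, tsum_poissonPi_natCast fun i => (hc i).le⟩

/-- If `c` is a complex balanced equilibrium, then the product of
Poissons `π(x) = ∏_i e^{-c_i} c_i^{x_i}/x_i!` is a stationary distribution for the
stochastic mass action model, and it has total mass `1`. -/
theorem stmt1 (m K : ℕ) (y y' : Fin K → Fin m → ℕ) (κ : Fin K → ℝ) (c : Fin m → ℝ)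
    (hyy' : ∀ k, y k ≠ y' k) (hκ : ∀ k, 0 < κ k) (hc : ∀ i, 0 < c i)
    (hcb : complexBalanced m K y y' κ c) :
    stationaryEq m K y y' (poissonPi m c) (maIntensity m K y κ) ∧
      ∑' x : Fin m → ℕ, poissonPi m c (fun i => (x i : ℤ)) = 1 :=
  stmt1_general m K y y' κ c hc hcb
end

section
/- Let θ_i : ℤ → ℝ_{≥0} (i = 1,…,m) satisfy θ_i(x) = 0 for x ≤ 0 and θ_i(x) → ∞ as x → ∞. Let z^1,…,z^n ∈ ℤ^m_{≥0} be pairwise distinct vectors and α_1,…,α_n ∈ ℝ. If ∑_{j=1}^n α_j ∏_{i=1}^m ∏_{r=0}^{z^j_i − 1} θ_i(x_i − r) = 0 for every x ∈ ℤ^m (empty products equal 1), then α_1 = … = α_n = 0; that is, the functions x ↦ ∏_{i=1}^m θ_i(x_i)⋯θ_i(x_i − z_i + 1) indexed by distinct z ∈ ℤ^m_{≥0} are linearly independent. -/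
/-!
With `P_k(y) = θ(y) θ(y - 1) ⋯ θ(y - k + 1)` one has `P_{k+1} = P_k · θ(· - k)`, so `θ → ∞`
gives `P_j = o(P_k)` as `y → ∞` whenever `j < k`. Functions strictly ordered by growth are
linearly independent: in a vanishing combination the fastest-growing term cannot be cancelled by
the others. The functions of the theorem are products `∏ i, P^{(i)}_{z_i}(x_i)` in separate
variables, and products in separate variables of linearly independent families are again
linearly independent (fix all but one variable).
-/

open Finset Filter Asymptotics

theorem linearIndependent_of_isLittleO {ι α 𝕜 : Type*} [LinearOrder ι] [NormedField 𝕜]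
    {l : Filter α} {f : ι → α → 𝕜} (hlt : ∀ ⦃j k⦄, j < k → f j =o[l] f k)
    (hne : ∀ k, ∃ᶠ x in l, f k x ≠ 0) : LinearIndependent 𝕜 f := by
  classical
  rw [linearIndependent_iff']
  intro s
  induction s using Finset.induction_on_max with
  | empty => simp
  | insert K t hK ih =>
    intro g hg
    rw [sum_insert fun hKt => (hK K hKt).false] at hg
    have hgK : g K = 0 := by
      by_contra hgK
      -- by `hg`, `g K • f K` is minus a combination of the `f j` with `j < K`
      have hsmall : (fun x => g K * f K x) =o[l] f K := by
        refine (IsLittleO.sum fun j hj => (hlt (hK j hj)).const_smul_left (g j)).neg_left.congr_left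
          fun x => ?_
        simpa [neg_eq_iff_add_eq_zero, add_comm] using congrFun hg x
      exact isLittleO_irrefl (hne K) ((isLittleO_const_mul_left_iff hgK).1 hsmall)
    rw [hgK, zero_smul, zero_add] at hg
    intro i hi
    rcases mem_insert.1 hi with rfl | hit
    · exact hgK
    · exact ih g hg i hit

theorem LinearIndependent.mul_prod {ι κ α β R : Type*} [CommRing R] {f : ι → α → R}
    {g : κ → β → R} (hf : LinearIndependent R f) (hg : LinearIndependent R g) :
    LinearIndependent R fun p : ι × κ => fun q : α × β => f p.1 q.1 * g p.2 q.2 := by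
  classical
  rw [linearIndependent_iff''] at hf hg ⊢
  intro s c hc hsum
  set S₁ := s.image Prod.fst
  set S₂ := s.image Prod.snd
  have hcS : ∀ i j, (i ∉ S₁ ∨ j ∉ S₂) → c (i, j) = 0 := fun i j hij =>
    hc _ fun hs => hij.elim (· (mem_image_of_mem Prod.fst hs)) (· (mem_image_of_mem Prod.snd hs))
  have hrel : ∀ x y, ∑ j ∈ S₂, (∑ i ∈ S₁, c (i, j) * f i x) * g j y = 0 := by
    intro x y
    have hsub : s ⊆ S₁ ×ˢ S₂ := fun p hp =>
      mem_product.2 ⟨mem_image_of_mem _ hp, mem_image_of_mem _ hp⟩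
    have h := congrFun hsum (x, y)
    rw [Finset.sum_apply, sum_subset hsub fun p _ hp => by simp [hc p hp], sum_product,
      sum_comm] at h
    simpa [sum_mul, mul_assoc] using h
  -- for fixed `x`, `hrel` is a relation among the `g j`
  have hrow : ∀ x j, ∑ i ∈ S₁, c (i, j) * f i x = 0 := fun x =>
    hg S₂ _ (fun j hj => sum_eq_zero fun i _ => by simp [hcS i j (.inr hj)])
      (funext fun y => by simpa [Finset.sum_apply] using hrel x y)
  rintro ⟨i, j⟩
  exact hf S₁ (fun i => c (i, j)) (fun i hi => hcS i j (.inl hi))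
    (funext fun x => by simpa [Finset.sum_apply] using hrow x j) i

theorem linearIndependent_pi_prod {ι α R : Type*} [CommRing R] :
    ∀ {m : ℕ} {f : Fin m → ι → α → R}, (∀ i, LinearIndependent R (f i)) →
      LinearIndependent R fun w : Fin m → ι => fun x : Fin m → α => ∏ i, f i (w i) (x i)
  | 0, _, _ => .of_subsingleton' isEmptyElim fun r hr => by simpa using congrFun hr isEmptyElim
  | m + 1, f, hf => by
    have hsplit : Function.Surjective fun x : Fin (m + 1) → α => (x 0, Fin.tail x) :=
      fun q => ⟨Fin.cons q.1 q.2, by simp⟩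
    have hprod := ((hf 0).mul_prod (linearIndependent_pi_prod fun i => hf i.succ)).map'
      (LinearMap.funLeft R R _) (LinearMap.ker_eq_bot.2
        (LinearMap.funLeft_injective_of_surjective R R _ hsplit))
    refine (linearIndependent_equiv' (Fin.consEquiv fun _ => ι) ?_).1 hprod
    ext ⟨a, w⟩ x
    simp [Fin.prod_univ_succ, Fin.tail]

def descProd {M : Type*} [CommMonoid M] (θ : ℤ → M) (k : ℕ) (y : ℤ) : M :=
  ∏ r ∈ range k, θ (y - r)

theorem descProd_succ {M : Type*} [CommMonoid M] (θ : ℤ → M) (k : ℕ) (y : ℤ) :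
    descProd θ (k + 1) y = descProd θ k y * θ (y - k) :=
  prod_range_succ _ _

section descProd

variable {𝕜 : Type*} [NormedField 𝕜] {θ : ℤ → 𝕜}

theorem tendsto_norm_comp_sub_const (hθ : Tendsto (fun y => ‖θ y‖) atTop atTop) (r : ℤ) :
    Tendsto (fun y => ‖θ (y - r)‖) atTop atTop :=
  hθ.comp <| tendsto_atTop_atTop.2 fun b => ⟨b + r, fun y hy => by omega⟩

theorem descProd_isLittleO_succ (hθ : Tendsto (fun y => ‖θ y‖) atTop atTop) (k : ℕ) :
    descProd θ k =o[atTop] descProd θ (k + 1) := by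
  have hone : (fun _ => (1 : 𝕜)) =o[atTop] fun y => θ (y - k) :=
    (isLittleO_one_left_iff 𝕜).2 (tendsto_norm_comp_sub_const hθ k)
  have hsucc : descProd θ (k + 1) = fun y => descProd θ k y * θ (y - k) :=
    funext (descProd_succ θ k)
  simpa [hsucc] using (isBigO_refl (descProd θ k) atTop).mul_isLittleO hone

theorem descProd_isLittleO (hθ : Tendsto (fun y => ‖θ y‖) atTop atTop) {j k : ℕ} (hjk : j < k) :
    descProd θ j =o[atTop] descProd θ k := by
  induction k, hjk using Nat.le_induction with
  | base => exact descProd_isLittleO_succ hθ j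
  | succ k _ ih => exact ih.trans (descProd_isLittleO_succ hθ k)

theorem eventually_descProd_ne_zero (hθ : Tendsto (fun y => ‖θ y‖) atTop atTop) (k : ℕ) :
    ∀ᶠ y in atTop, descProd θ k y ≠ 0 := by
  have hfactors : ∀ r ∈ range k, ∀ᶠ y in atTop, θ (y - r) ≠ 0 := fun r _ =>
    ((tendsto_norm_comp_sub_const hθ r).eventually_gt_atTop 0).mono fun _ => norm_pos_iff.1
  filter_upwards [(eventually_all_finset _).2 hfactors] with y hy
  exact prod_ne_zero_iff.2 hy

theorem linearIndependent_descProd (hθ : Tendsto (fun y => ‖θ y‖) atTop atTop) :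
    LinearIndependent 𝕜 (descProd θ) :=
  linearIndependent_of_isLittleO (fun _ _ => descProd_isLittleO hθ) fun k =>
    (eventually_descProd_ne_zero hθ k).frequently

end descProd

theorem stmt5_general (m : ℕ) (θ : Fin m → ℤ → ℝ)
    (hθlim : ∀ i, Filter.Tendsto (θ i) Filter.atTop Filter.atTop)
    (n : ℕ) (z : Fin n → Fin m → ℕ) (hz : Function.Injective z) (α : Fin n → ℝ)
    (h : ∀ x : Fin m → ℤ,
      ∑ j : Fin n, α j * ∏ i, ∏ r ∈ Finset.range (z j i), θ i (x i - r) = 0) :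
    ∀ j, α j = 0 := by
  have hind : LinearIndependent ℝ fun (w : Fin m → ℕ) (x : Fin m → ℤ) =>
      ∏ i, descProd (θ i) (w i) (x i) :=
    linearIndependent_pi_prod fun i =>
      linearIndependent_descProd (tendsto_norm_atTop_atTop.comp (hθlim i))
  refine Fintype.linearIndependent_iff.1 (hind.comp z hz) α (funext fun x => ?_)
  simpa [descProd] using h x

/-- For `θ_i : ℤ → ℝ_{≥0}` vanishing on `ℤ_{≤0}` and tending to `∞`,
the product functions `x ↦ ∏_i ∏_{r=0}^{z_i - 1} θ_i(x_i - r)` associated with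
pairwise distinct vectors `z^1, …, z^n ∈ ℤ^m_{≥0}` are linearly independent. -/
theorem stmt5 (m : ℕ) (θ : Fin m → ℤ → ℝ)
    (hθnn : ∀ i x, 0 ≤ θ i x)
    (hθ0 : ∀ i, ∀ x : ℤ, x ≤ 0 → θ i x = 0)
    (hθlim : ∀ i, Filter.Tendsto (θ i) Filter.atTop Filter.atTop)
    (n : ℕ) (z : Fin n → Fin m → ℕ) (hz : Function.Injective z) (α : Fin n → ℝ)
    (h : ∀ x : Fin m → ℤ,
      ∑ j : Fin n, α j * ∏ i, ∏ r ∈ Finset.range (z j i), θ i (x i - r) = 0) :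
    ∀ j, α j = 0 :=
  stmt5_general m θ hθlim n z hz α h
end

section
/- Consider a reaction network with rate constants κ_k and stochastic mass action intensity functions λ_k. Suppose that for some c ∈ ℝ^m_{>0} the product of Poisson distributions π(x) = ∏_{i=1}^m e^{−c_i} c_i^{x_i}/x_i! satisfies the stationarity equation ∑_{k=1}^K π(x − y_k' + y_k) λ_k(x − y_k' + y_k) = π(x) ∑_{k=1}^K λ_k(x) for every x ∈ ℤ^m_{≥0} (with π extended by 0 outside ℤ^m_{≥0}). Then c is a complex balanced equilibrium of the network: for every complex z ∈ C, ∑_{k : y_k' = z} κ_k c^{y_k} = ∑_{k : y_k = z} κ_k c^{y_k}. -/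
open Finset Filter

/-! The mass-action identity `π(u) λ_k(u) = κ_k c^{y_k} π(u - y_k)` turns the stationarity
equation at `x` into `∑_z (in_z - out_z) π(x - z) = 0`, where `in_z` and `out_z` are the
complex-balance flows into and out of the complex `z`. As `π(x - z)` vanishes unless `z ≤ x`
and `π(0) ≠ 0`, this linear system is triangular for the coordinatewise order, so every
coefficient `in_z - out_z` vanishes. -/

theorem Finset.eq_zero_of_sum_mul_triangular_eq_zero {ι R : Type*} [PartialOrder ι]
    [Semiring R] [NoZeroDivisors R] {S : Finset ι} {a : ι → R} {f : ι → ι → R}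
    (hdiag : ∀ z ∈ S, f z z ≠ 0) (htri : ∀ b z, ¬ b ≤ z → f b z = 0)
    (hsum : ∀ x ∈ S, ∑ b ∈ S, a b * f b x = 0) :
    ∀ z ∈ S, a z = 0 := by
  by_contra! hne
  have hfin : {b | b ∈ S ∧ a b ≠ 0}.Finite := S.finite_toSet.subset fun _ hb => hb.1
  obtain ⟨z, ⟨hzS, hz⟩, hmin⟩ := hfin.exists_minimal hne
  have hrest : ∀ b ∈ S, b ≠ z → a b * f b z = 0 := by
    intro b hb hbz
    by_cases hle : b ≤ z
    · have hab : a b = 0 := by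
        by_contra hab
        exact hbz (le_antisymm hle (hmin ⟨hb, hab⟩ hle))
      rw [hab, zero_mul]
    · rw [htri b z hle, mul_zero]
  have hz_eq := hsum z hzS
  rw [sum_eq_single_of_mem z hzS hrest] at hz_eq
  exact hz ((mul_eq_zero.mp hz_eq).resolve_right (hdiag z hzS))

theorem Finset.sum_mul_comp_eq_sum_fiberwise {α ι R : Type*} [DecidableEq ι]
    [NonUnitalNonAssocSemiring R] {s : Finset α} {t : Finset ι} {g : α → ι}
    (h : ∀ a ∈ s, g a ∈ t) (w : α → R) (F : ι → R) :
    ∑ a ∈ s, w a * F (g a) = ∑ z ∈ t, (∑ a ∈ s with g a = z, w a) * F z := by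
  rw [← sum_fiberwise_of_maps_to h]
  refine sum_congr rfl fun z _ => ?_
  rw [sum_mul]
  exact sum_congr rfl fun a ha => by rw [(mem_filter.mp ha).2]

theorem poissonPi_mul_maIntensity (m K : ℕ) (y : Fin K → Fin m → ℕ) (κ : Fin K → ℝ)
    (c : Fin m → ℝ) (k : Fin K) (u : Fin m → ℤ) :
    poissonPi m c u * maIntensity m K y κ k u =
      κ k * (∏ i, c i ^ y k i) * poissonPi m c (fun i => u i - y k i) := by
  unfold poissonPi maIntensity
  by_cases hyu : ∀ i, (y k i : ℤ) ≤ u i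
  · have hu : ∀ i, 0 ≤ u i := fun i => (Int.natCast_nonneg _).trans (hyu i)
    have hd : ∀ i, 0 ≤ u i - y k i := fun i => sub_nonneg.mpr (hyu i)
    rw [if_pos hu, if_pos hyu, if_pos hd, mul_left_comm, mul_assoc, ← prod_mul_distrib,
      ← prod_mul_distrib]
    congr 1
    refine prod_congr rfl fun i _ => ?_
    obtain ⟨d, hd⟩ := Int.eq_ofNat_of_zero_le (hd i)
    have hud : (u i).toNat = d + y k i := by omega
    simp only [hd, hud, Int.toNat_natCast, Nat.add_sub_cancel, pow_add]
    have := (d + y k i).factorial_ne_zero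
    have := d.factorial_ne_zero
    field_simp
  · obtain ⟨i, hi⟩ := not_forall.mp hyu
    have hd : ¬ ∀ i, 0 ≤ u i - y k i := fun h => hi (sub_nonneg.mp (h i))
    rw [if_neg hyu, if_neg hd, mul_zero, mul_zero]

theorem poissonPi_sub_self_ne_zero {m : ℕ} (c : Fin m → ℝ) (x : Fin m → ℕ) :
    poissonPi m c (fun i => x i - x i) ≠ 0 := by
  simp [poissonPi, prod_ne_zero_iff, Real.exp_ne_zero]

theorem poissonPi_sub_eq_zero {m : ℕ} (c : Fin m → ℝ) {b x : Fin m → ℕ} (hbx : ¬ b ≤ x) :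
    poissonPi m c (fun i => x i - b i) = 0 := by
  refine if_neg fun h => hbx fun i => ?_
  simpa using h i

theorem sum_flux_mul_poissonPi_eq (m K : ℕ) (y y' : Fin K → Fin m → ℕ) (κ : Fin K → ℝ)
    (c : Fin m → ℝ) (hstat : stationaryEq m K y y' (poissonPi m c) (maIntensity m K y κ))
    (x : Fin m → ℕ) :
    ∑ k, κ k * (∏ i, c i ^ y k i) * poissonPi m c (fun i => x i - y' k i) =
      ∑ k, κ k * (∏ i, c i ^ y k i) * poissonPi m c (fun i => x i - y k i) := by
  have h := hstat x
  simp only [poissonPi_mul_maIntensity, mul_sum, add_sub_cancel_right] at h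
  exact h

theorem stmt8_general (m K : ℕ) (y y' : Fin K → Fin m → ℕ) (κ : Fin K → ℝ) (c : Fin m → ℝ)
    (hstat : stationaryEq m K y y' (poissonPi m c) (maIntensity m K y κ)) :
    complexBalanced m K y y' κ c := by
  classical
  set C : Finset (Fin m → ℕ) := univ.image y ∪ univ.image y'
  set flux : Fin K → ℝ := fun k => κ k * ∏ i, c i ^ y k i
  have hy : ∀ k ∈ univ, y k ∈ C := fun k _ => by simp [C]
  have hy' : ∀ k ∈ univ, y' k ∈ C := fun k _ => by simp [C]
  have hbalance : ∀ x ∈ C, ∑ z ∈ C, ((∑ k with y' k = z, flux k) - ∑ k with y k = z, flux k) *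
      poissonPi m c (fun i => x i - z i) = 0 := by
    intro x _
    simp only [sub_mul, sum_sub_distrib,
      ← sum_mul_comp_eq_sum_fiberwise hy, ← sum_mul_comp_eq_sum_fiberwise hy']
    exact sub_eq_zero.mpr (sum_flux_mul_poissonPi_eq m K y y' κ c hstat x)
  intro z hz
  refine sub_eq_zero.mp (eq_zero_of_sum_mul_triangular_eq_zero
    (f := fun b x => poissonPi m c (fun i => x i - b i))
    (fun b _ => poissonPi_sub_self_ne_zero c b) (fun _ _ => poissonPi_sub_eq_zero c) hbalance z ?_)
  rcases hz with ⟨k, rfl⟩ | ⟨k, rfl⟩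
  · exact hy k (mem_univ k)
  · exact hy' k (mem_univ k)

/-- (Cappelletti–Wiuf converse.) If the product of Poissons with
parameter `c` satisfies the stationarity equation for the stochastic mass action
model, then `c` is a complex balanced equilibrium. -/
theorem stmt8 (m K : ℕ) (y y' : Fin K → Fin m → ℕ) (κ : Fin K → ℝ) (c : Fin m → ℝ)
    (hyy' : ∀ k, y k ≠ y' k) (hκ : ∀ k, 0 < κ k) (hc : ∀ i, 0 < c i)
    (hstat : stationaryEq m K y y' (poissonPi m c) (maIntensity m K y κ)) :
    complexBalanced m K y y' κ c :=
  stmt8_general m K y y' κ c hstat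
end

section
/- Let c ∈ ℝ^m_{>0}, and for V > 0 let π^V(x) = ∏_{i=1}^m e^{−V c_i} (V c_i)^{x_i}/x_i! for x ∈ ℤ^m_{≥0}. Let V_n > 0 with V_n → ∞ and x_n ∈ ℤ^m_{≥0} be such that x_n / V_n → x̃ ∈ ℝ^m_{>0}. Then lim_{n→∞} [ −(1/V_n) ln π^{V_n}(x_n) ] = 𝒱(x̃), where 𝒱(x̃) = ∑_{i=1}^m [ x̃_i (ln x̃_i − ln c_i − 1) + c_i ] is the standard Lyapunov function of chemical reaction network theory. -/
/-!
The logarithm of a Poisson weight is `-V c + x log (V c) - log x!`. Stirling's formula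
`log k! = k log k - k + o(k)` turns it into `-V (c - u log c + u log u - u) + o(V)` with
`u = x / V → x̃`, which gives the limit one coordinate at a time; the logarithm of the product is
the sum over the coordinates.
-/

open Finset Filter Asymptotics Real Topology
open scoped Nat

lemma log_factorial_sub_eq_log_stirlingSeq_add (k : ℕ) :
    log k ! - (k * log k - k) = log (Stirling.stirlingSeq k) + 1 / 2 * log (2 * k) := by
  rcases eq_or_ne k 0 with rfl | hk
  · simp
  rw [Stirling.log_stirlingSeq_formula, log_div (by exact_mod_cast hk) (exp_ne_zero 1), log_exp]
  ring

lemma isLittleO_log_factorial_sub :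
    (fun k : ℕ => log k ! - (k * log k - k)) =o[atTop] (fun k : ℕ => (k : ℝ)) := by
  simp only [log_factorial_sub_eq_log_stirlingSeq_add]
  have hk : Tendsto (fun k : ℕ => (k : ℝ)) atTop atTop := tendsto_natCast_atTop_atTop
  refine IsLittleO.add ?_ (IsLittleO.const_mul_left ?_ _)
  · have hbounded : (fun k => log (Stirling.stirlingSeq k)) =O[atTop] (fun _ => (1 : ℝ)) :=
      ((continuousAt_log (by positivity)).tendsto.comp
        Stirling.tendsto_stirlingSeq_sqrt_pi).isBigO_one ℝ
    exact hbounded.trans_isLittleO <| (isLittleO_one_left_iff ℝ).2 <|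
      tendsto_norm_atTop_atTop.comp hk
  · have h2k : Tendsto (fun k : ℕ => 2 * (k : ℝ)) atTop atTop := hk.const_mul_atTop two_pos
    exact (isLittleO_log_id_atTop.comp_tendsto h2k).trans_isBigO
      ((isBigO_refl _ _).const_mul_left 2)

lemma log_exp_neg_mul_pow_div_factorial {r : ℝ} (hr : r ≠ 0) (k : ℕ) :
    log (exp (-r) * r ^ k / k !) = -r + k * log r - log k ! := by
  rw [log_div (by positivity) (by positivity), log_mul (exp_ne_zero _) (by positivity), log_exp,
    log_pow]

theorem tendsto_neg_inv_mul_log_poisson {ι : Type*} {l : Filter ι} {c t : ℝ} (hc : c ≠ 0)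
    (ht : 0 < t) {V : ι → ℝ} {k : ι → ℕ} (hV : Tendsto V l atTop)
    (hk : Tendsto (fun n => (k n : ℝ) / V n) l (𝓝 t)) :
    Tendsto (fun n => -(1 / V n) * log (exp (-(V n * c)) * (V n * c) ^ k n / (k n) !))
      l (𝓝 (t * (log t - log c - 1) + c)) := by
  have hVpos : ∀ᶠ n in l, 0 < V n := hV.eventually_gt_atTop 0
  have hkV : (fun n => (k n : ℝ) / V n * V n) =ᶠ[l] fun n => (k n : ℝ) := by
    filter_upwards [hVpos] with n hn
    field_simp
  have hk_atTop : Tendsto k l atTop := by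
    rw [← tendsto_natCast_atTop_iff (R := ℝ)]
    exact (hk.pos_mul_atTop ht hV).congr' hkV
  have hremainder : Tendsto (fun n => (log (k n) ! - (k n * log (k n) - k n)) / V n) l (𝓝 0) := by
    refine IsLittleO.tendsto_div_nhds_zero ?_
    refine (isLittleO_log_factorial_sub.comp_tendsto hk_atTop).trans_isBigO ?_
    refine ((hk.isBigO_one ℝ).mul (isBigO_refl V l)).congr' hkV ?_
    simp
  have hmain : Tendsto (fun n => c - k n / V n * log c + k n / V n * log (k n / V n) - k n / V n
      + (log (k n) ! - (k n * log (k n) - k n)) / V n) l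
      (𝓝 (c - t * log c + t * log t - t + 0)) :=
    (((tendsto_const_nhds.sub (hk.mul_const _)).add
      (hk.mul ((continuousAt_log ht.ne').tendsto.comp hk))).sub hk).add hremainder
  convert hmain.congr' ?_ using 2
  · ring
  filter_upwards [hVpos] with n hn
  rw [log_exp_neg_mul_pow_div_factorial (by positivity), log_mul hn.ne' hc]
  rcases eq_or_ne (k n) 0 with h | h
  · simp [h, hn.ne']
  rw [log_div (by exact_mod_cast h) hn.ne']
  field_simp
  ring

theorem stmt10_general (m : ℕ) (c : Fin m → ℝ) (hc : ∀ i, 0 < c i)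
    (V : ℕ → ℝ)
    (hVlim : Filter.Tendsto V Filter.atTop Filter.atTop)
    (x : ℕ → Fin m → ℕ) (xt : Fin m → ℝ) (hxt : ∀ i, 0 < xt i)
    (hx : ∀ i, Filter.Tendsto (fun n => (x n i : ℝ) / V n) Filter.atTop (nhds (xt i))) :
    Filter.Tendsto
      (fun n => -(1 / V n) * Real.log
        (∏ i, Real.exp (-(V n * c i)) * (V n * c i) ^ (x n i) / ((x n i).factorial : ℝ)))
      Filter.atTop
      (nhds (∑ i, (xt i * (Real.log (xt i) - Real.log (c i) - 1) + c i))) := by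
  have hlog_prod : ∀ᶠ n in atTop, Real.log
      (∏ i, Real.exp (-(V n * c i)) * (V n * c i) ^ (x n i) / ((x n i).factorial : ℝ)) =
      ∑ i, Real.log (Real.exp (-(V n * c i)) * (V n * c i) ^ (x n i) / ((x n i).factorial : ℝ)) := by
    filter_upwards [hVlim.eventually_gt_atTop 0] with n hn
    exact Real.log_prod fun i _ => by have := hc i; positivity
  refine (tendsto_finsetSum univ fun i _ =>
    tendsto_neg_inv_mul_log_poisson (hc i).ne' (hxt i) hVlim (hx i)).congr' ?_
  filter_upwards [hlog_prod] with n h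
  rw [h, mul_sum]

/-- (Anderson–Craciun–Gopalkrishnan–Wiuf.) Under the classical
scaling, the scaled non-equilibrium potential of the product-Poisson stationary
distribution `π^V(x) = ∏_i e^{-V c_i}(V c_i)^{x_i}/x_i!` converges, along any sequence
`V_n → ∞`, `x_n / V_n → x̃ ∈ ℝ^m_{>0}`, to the standard Lyapunov function
`𝒱(x̃) = ∑_i [x̃_i(ln x̃_i - ln c_i - 1) + c_i]`. -/
theorem stmt10 (m : ℕ) (c : Fin m → ℝ) (hc : ∀ i, 0 < c i)
    (V : ℕ → ℝ) (hV : ∀ n, 0 < V n)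
    (hVlim : Filter.Tendsto V Filter.atTop Filter.atTop)
    (x : ℕ → Fin m → ℕ) (xt : Fin m → ℝ) (hxt : ∀ i, 0 < xt i)
    (hx : ∀ i, Filter.Tendsto (fun n => (x n i : ℝ) / V n) Filter.atTop (nhds (xt i))) :
    Filter.Tendsto
      (fun n => -(1 / V n) * Real.log
        (∏ i, Real.exp (-(V n * c i)) * (V n * c i) ^ (x n i) / ((x n i).factorial : ℝ)))
      Filter.atTop
      (nhds (∑ i, (xt i * (Real.log (xt i) - Real.log (c i) - 1) + c i))) :=
  stmt10_general m c hc V hVlim x xt hxt hx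
end

section
/- Let d ∈ ℝ^m_{>0} and c ∈ ℝ^m_{>0}. Then for every V > 0 the sum S(V) = ∑_{x ∈ ℤ^m_{≥0}} ∏_{i=1}^m (V^{d_i} c_i)^{x_i}/(x_i!)^{d_i} is finite, and lim_{V→∞} (1/V) ln S(V) = ∑_{i=1}^m d_i c_i^{1/d_i}. -/
/-!
With `a = c ^ (1 / d)` the summand is `∏ᵢ ((V aᵢ) ^ xᵢ / xᵢ!) ^ dᵢ`, so the sum factorizes into
`∏ᵢ f_{dᵢ}(V aᵢ)` with `f_d(t) = ∑ₙ (tⁿ / n!) ^ d`, and it suffices that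
`log f_d(t) = d t + O(log t)`. Once `n + 1 ≥ 2t` consecutive terms of `f_d(t)` shrink by the factor
`(t / (n + 1)) ^ d ≤ 2 ^ (-d)`, so `f_d(t)` is at most `2t + O(1)` times its largest term. That
term is at most `e ^ (d t)` because `tⁿ / n! ≤ eᵗ`. Conversely every `tⁿ / n!` is at most
`f_d(t) ^ (1 / d)`, so the same estimate with `d = 1`, applied to `eᵗ = ∑ₙ tⁿ / n!`, gives
`f_d(t) ≥ (eᵗ / (2t + 3)) ^ d`.
-/

open Finset Filter

open scoped Topology Nat
open Real Asymptotics

theorem tsum_le_of_ratio_le {f : ℕ → ℝ} {r M : ℝ} (N : ℕ) (hf : Summable f) (hr₀ : 0 ≤ r)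
    (hr₁ : r < 1) (hM : ∀ n, f n ≤ M) (hratio : ∀ n, N ≤ n → f (n + 1) ≤ r * f n) :
    ∑' n, f n ≤ (N + (1 - r)⁻¹) * M := by
  have htail : ∀ k, f (k + N) ≤ M * r ^ k := by
    intro k
    induction k with
    | zero => simpa using hM N
    | succ k ih =>
      calc f (k + 1 + N) = f (k + N + 1) := by rw [add_right_comm]
        _ ≤ r * f (k + N) := hratio _ (Nat.le_add_left N k)
        _ ≤ r * (M * r ^ k) := mul_le_mul_of_nonneg_left ih hr₀
        _ = M * r ^ (k + 1) := by ring
  have hhead : ∑ n ∈ range N, f n ≤ N * M := by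
    simpa using Finset.sum_le_card_nsmul (range N) f M fun n _ => hM n
  have htsum : ∑' k, f (k + N) ≤ M * (1 - r)⁻¹ := by
    rw [← tsum_geometric_of_lt_one hr₀ hr₁, ← tsum_mul_left]
    exact ((summable_nat_add_iff N).2 hf).tsum_le_tsum htail
      ((summable_geometric_of_lt_one hr₀ hr₁).mul_left M)
  rw [← hf.sum_add_tsum_nat_add N]
  linarith

theorem pow_succ_div_factorial_succ (t : ℝ) (n : ℕ) :
    t ^ (n + 1) / (n + 1)! = t / (n + 1) * (t ^ n / n !) := by
  rw [Nat.factorial_succ, Nat.cast_mul, pow_succ]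
  field_simp
  push_cast
  ring

theorem pow_div_factorial_rpow_succ_le {d t : ℝ} (hd : 0 ≤ d) (ht : 0 ≤ t) {n : ℕ}
    (hn : 2 * t ≤ n + 1) :
    (t ^ (n + 1) / (n + 1)! : ℝ) ^ d ≤ (1 / 2) ^ d * (t ^ n / n !) ^ d := by
  rw [← mul_rpow (by norm_num) (by positivity), pow_succ_div_factorial_succ]
  refine rpow_le_rpow (by positivity) (mul_le_mul_of_nonneg_right ?_ (by positivity)) hd
  rw [div_le_iff₀ (by positivity)]
  linarith

theorem summable_pow_div_factorial_rpow {d : ℝ} (hd : 0 < d) {t : ℝ} (ht : 0 ≤ t) :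
    Summable fun n : ℕ => (t ^ n / n ! : ℝ) ^ d := by
  refine summable_of_ratio_norm_eventually_le (r := (1 / 2) ^ d)
    (rpow_lt_one (by norm_num) (by norm_num) hd) ?_
  filter_upwards [eventually_ge_atTop ⌈2 * t⌉₊] with n hn
  simp only [norm_of_nonneg (by positivity : (0 : ℝ) ≤ (t ^ _ / _ ! : ℝ) ^ d)]
  exact pow_div_factorial_rpow_succ_le hd.le ht (by linarith [Nat.ceil_le.1 hn])

theorem tsum_pow_div_factorial_rpow_pos {d t : ℝ} (hd : 0 < d) (ht : 0 ≤ t) :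
    0 < ∑' n : ℕ, (t ^ n / n ! : ℝ) ^ d :=
  (summable_pow_div_factorial_rpow hd ht).tsum_pos (fun n => by positivity) 0 (by simp)

theorem tsum_pow_div_factorial_rpow_le {d t M : ℝ} (hd : 0 < d) (ht : 0 ≤ t)
    (hM : ∀ n : ℕ, (t ^ n / n ! : ℝ) ^ d ≤ M) :
    ∑' n : ℕ, (t ^ n / n ! : ℝ) ^ d ≤ (2 * t + 1 + (1 - (1 / 2) ^ d)⁻¹) * M := by
  have hM₀ : 0 ≤ M := zero_le_one.trans (by simpa using hM 0)
  have hceil : (⌈2 * t⌉₊ : ℝ) ≤ 2 * t + 1 := (Nat.ceil_lt_add_one (by positivity)).le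
  refine (tsum_le_of_ratio_le (r := (1 / 2) ^ d) ⌈2 * t⌉₊ (summable_pow_div_factorial_rpow hd ht)
    (by positivity) (rpow_lt_one (by norm_num) (by norm_num) hd) hM fun n hn => ?_).trans
    (by gcongr)
  exact pow_div_factorial_rpow_succ_le hd.le ht (by linarith [Nat.ceil_le.1 hn])

theorem log_tsum_pow_div_factorial_rpow_le {d t : ℝ} (hd : 0 < d) (ht : 0 ≤ t) :
    log (∑' n : ℕ, (t ^ n / n ! : ℝ) ^ d) ≤ d * t + log (2 * t + 1 + (1 - (1 / 2) ^ d)⁻¹) := by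
  have hK : 0 < (1 - (1 / 2 : ℝ) ^ d)⁻¹ :=
    inv_pos.2 (sub_pos.2 (rpow_lt_one (by norm_num) (by norm_num) hd))
  have hS := tsum_pow_div_factorial_rpow_pos hd ht
  have hbound := tsum_pow_div_factorial_rpow_le hd ht fun n =>
    (rpow_le_rpow (by positivity) (pow_div_factorial_le_exp t ht n) hd.le).trans_eq
      (exp_mul t d).symm
  calc log (∑' n : ℕ, (t ^ n / n ! : ℝ) ^ d)
      ≤ log ((2 * t + 1 + (1 - (1 / 2) ^ d)⁻¹) * exp (t * d)) := log_le_log hS hbound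
    _ = d * t + log (2 * t + 1 + (1 - (1 / 2) ^ d)⁻¹) := by
      rw [log_mul (by positivity) (exp_pos _).ne', log_exp]
      ring

theorem le_log_tsum_pow_div_factorial_rpow {d t : ℝ} (hd : 0 < d) (ht : 0 ≤ t) :
    d * t - d * log (2 * t + 3) ≤ log (∑' n : ℕ, (t ^ n / n ! : ℝ) ^ d) := by
  set S := ∑' n : ℕ, (t ^ n / n ! : ℝ) ^ d
  have hS : 0 < S := tsum_pow_div_factorial_rpow_pos hd ht
  have hterm : ∀ n : ℕ, (t ^ n / n ! : ℝ) ^ (1 : ℝ) ≤ S ^ d⁻¹ := fun n => by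
    rw [rpow_one, ← rpow_rpow_inv (by positivity : (0 : ℝ) ≤ t ^ n / n !) hd.ne']
    exact rpow_le_rpow (by positivity)
      ((summable_pow_div_factorial_rpow hd ht).le_tsum n fun _ _ => by positivity) (by positivity)
  have hexp : exp t ≤ (2 * t + 3) * S ^ d⁻¹ := by
    have h := tsum_pow_div_factorial_rpow_le one_pos ht hterm
    norm_num [rpow_one] at h
    rw [exp_eq_exp_ℝ, NormedSpace.exp_eq_tsum_div]
    convert h using 2
    ring
  have := log_le_log (exp_pos t) hexp
  rw [log_exp, log_mul (by positivity) (by positivity), log_rpow hS] at this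
  have := mul_le_mul_of_nonneg_left this hd.le
  rw [mul_add, ← mul_assoc, mul_inv_cancel₀ hd.ne', one_mul] at this
  linarith

theorem tendsto_log_mul_add_div_atTop {a : ℝ} (ha : 0 < a) (b : ℝ) :
    Tendsto (fun t => log (a * t + b) / t) atTop (𝓝 0) := by
  have hlin : Tendsto (fun t => a * t + b) atTop atTop :=
    tendsto_atTop_add_const_right _ b (tendsto_id.const_mul_atTop ha)
  have hO : (fun t => a * t + b) =O[atTop] id :=
    (isBigO_const_mul_self a id _).add (isLittleO_const_id_atTop b).isBigO
  exact ((isLittleO_log_id_atTop.comp_tendsto hlin).trans_isBigO hO).tendsto_div_nhds_zero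

theorem tendsto_log_tsum_pow_div_factorial_rpow_div {d : ℝ} (hd : 0 < d) :
    Tendsto (fun t => log (∑' n : ℕ, (t ^ n / n ! : ℝ) ^ d) / t) atTop (𝓝 d) := by
  have hlower : Tendsto (fun t => d - d * (log (2 * t + 3) / t)) atTop (𝓝 d) := by
    simpa using tendsto_const_nhds.sub ((tendsto_log_mul_add_div_atTop two_pos 3).const_mul d)
  have hupper : Tendsto (fun t => d + log (2 * t + (1 + (1 - (1 / 2) ^ d)⁻¹)) / t) atTop
      (𝓝 d) := by
    simpa using tendsto_const_nhds.add (tendsto_log_mul_add_div_atTop two_pos _)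
  refine tendsto_of_tendsto_of_tendsto_of_le_of_le' hlower hupper ?_ ?_
  all_goals filter_upwards [eventually_gt_atTop 0] with t ht
  · rw [le_div_iff₀ ht]
    have := le_log_tsum_pow_div_factorial_rpow hd ht.le
    field_simp
    linarith
  · rw [div_le_iff₀ ht, add_mul, div_mul_cancel₀ _ ht.ne', ← add_assoc]
    exact log_tsum_pow_div_factorial_rpow_le hd ht.le

theorem tendsto_inv_mul_log_tsum_mul_pow_div_factorial_rpow {d a : ℝ} (hd : 0 < d)
    (ha : 0 < a) :
    Tendsto (fun V => 1 / V * log (∑' n : ℕ, ((V * a) ^ n / n ! : ℝ) ^ d)) atTop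
      (𝓝 (d * a)) := by
  have h := ((tendsto_log_tsum_pow_div_factorial_rpow_div hd).comp
    (tendsto_id.atTop_mul_const ha)).const_mul a
  rw [mul_comm a d] at h
  refine h.congr' ?_
  filter_upwards [eventually_gt_atTop 0] with V hV
  simp only [Function.comp_apply, id]
  field_simp

theorem hasSum_pi_prod_of_nonneg {β : Type*} {m : ℕ} {g : Fin m → β → ℝ}
    (hg₀ : ∀ i b, 0 ≤ g i b) (hg : ∀ i, Summable (g i)) :
    HasSum (fun x : Fin m → β => ∏ i, g i (x i)) (∏ i, ∑' b, g i b) := by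
  induction m with
  | zero => simp
  | succ m ih =>
    have htail : HasSum (fun x : Fin m → β => ∏ i : Fin m, g i.succ (x i))
        (∏ i : Fin m, ∑' b, g i.succ b) :=
      ih (fun i b => hg₀ i.succ b) fun i => hg i.succ
    have hmul : HasSum (fun p : β × (Fin m → β) => g 0 p.1 * ∏ i : Fin m, g i.succ (p.2 i))
        ((∑' b, g 0 b) * ∏ i : Fin m, ∑' b, g i.succ b) := by
      apply (hg 0).hasSum.mul htail
      apply (hg 0).mul_of_nonneg htail.summable (hg₀ 0)
      exact fun x => prod_nonneg fun i _ => hg₀ i.succ (x i)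
    rw [Fin.prod_univ_succ, ← (Fin.consEquiv fun _ => β).hasSum_iff]
    convert hmul using 2 with p
    simp [Fin.consEquiv, Fin.prod_univ_succ]

theorem pow_div_factorial_rpow_eq {a d : ℝ} (ha : 0 ≤ a) (hd : d ≠ 0) (n : ℕ) :
    a ^ n / (n ! : ℝ) ^ d = ((a ^ (1 / d)) ^ n / n !) ^ d := by
  rw [div_rpow (by positivity) (by positivity), ← rpow_pow_comm (by positivity),
    ← rpow_mul ha, one_div_mul_cancel hd, rpow_one]

/-- For `d, c ∈ ℝ^m_{>0}` and `V > 0`, the sum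
`S(V) = ∑_{x ∈ ℤ^m_{≥0}} ∏_i (V^{d_i} c_i)^{x_i}/(x_i!)^{d_i}` is finite, and
`(1/V) ln S(V) → ∑_i d_i c_i^{1/d_i}` as `V → ∞`. -/
theorem stmt15 (m : ℕ) (d c : Fin m → ℝ) (hd : ∀ i, 0 < d i) (hc : ∀ i, 0 < c i) :
    (∀ V : ℝ, 0 < V → Summable (fun x : Fin m → ℕ =>
      ∏ i, (V ^ (d i) * c i) ^ (x i) / ((x i).factorial : ℝ) ^ (d i))) ∧
    Filter.Tendsto
      (fun V : ℝ => (1 / V) * Real.log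
        (∑' x : Fin m → ℕ, ∏ i, (V ^ (d i) * c i) ^ (x i) / ((x i).factorial : ℝ) ^ (d i)))
      Filter.atTop (nhds (∑ i, d i * c i ^ (1 / d i))) := by
  have ha (i : Fin m) : 0 < c i ^ (1 / d i) := rpow_pos_of_pos (hc i) _
  have hterm (V : ℝ) (hV : 0 < V) (i : Fin m) (n : ℕ) :
      (V ^ d i * c i) ^ n / (n ! : ℝ) ^ d i = ((V * c i ^ (1 / d i)) ^ n / n !) ^ d i := by
    rw [pow_div_factorial_rpow_eq (by have := hc i; positivity) (hd i).ne',
      mul_rpow (by positivity) (hc i).le, ← rpow_mul hV.le, mul_one_div_cancel (hd i).ne',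
      rpow_one]
  have hsum (V : ℝ) (hV : 0 < V) : HasSum
      (fun x : Fin m → ℕ => ∏ i, (V ^ (d i) * c i) ^ (x i) / ((x i).factorial : ℝ) ^ (d i))
      (∏ i, ∑' n : ℕ, ((V * c i ^ (1 / d i)) ^ n / n ! : ℝ) ^ d i) := by
    simp only [hterm V hV]
    exact hasSum_pi_prod_of_nonneg (fun i n => by have := ha i; positivity)
      fun i => summable_pow_div_factorial_rpow (hd i) (mul_pos hV (ha i)).le
  refine ⟨fun V hV => (hsum V hV).summable, ?_⟩
  refine (tendsto_finsetSum _ fun i _ => tendsto_inv_mul_log_tsum_mul_pow_div_factorial_rpow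
    (hd i) (ha i)).congr' ?_
  filter_upwards [eventually_gt_atTop 0] with V hV
  rw [(hsum V hV).tsum_eq, log_prod fun i _ => (tsum_pow_div_factorial_rpow_pos (hd i)
    (mul_pos hV (ha i)).le).ne', mul_sum]
end
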